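/- arXiv:math/0701414 — 2 statements merged into one kernel-verified Lean document; each statement's English description precedes it below -/
import Mathlib

section
/- (Lemma 1.3) Let d ≥ 3, 1 ≤ m ≤ d−2, λ > 0 with e^λ m < d+1, and N ≥ 2. For any j ∈ ℤ and any nonempty A ⊆ F ∩ (C_j ∪ ∂C_j) with F ∈ L_m, one has ‖φ_j‖_∞ ≤ [e^λ/(1 − e^λ m/(d+1))] · (1 − m/(d+1)) · (1 + (‖φ_j‖_∞ − 1) q_N). -/
open MeasureTheory Filter
open scoped ENNReal Classical

namespace DiscCyl

/-- The lattice `ℤ^{d+1}`. -/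
abbrev Lat (d : ℕ) := Fin (d + 1) → ℤ

/-- The discrete cylinder `E = (ℤ/Nℤ)^d × ℤ`. -/
abbrev Cyl (d N : ℕ) := (Fin d → ZMod N) × ℤ

instance (N : ℕ) : MeasurableSpace (ZMod N) := ⊤

instance (N : ℕ) : Countable (ZMod N) := by
  cases N with
  | zero => exact inferInstanceAs (Countable ℤ)
  | succ n => exact inferInstanceAs (Countable (Fin (n + 1)))

/-- The canonical projection `π_E : ℤ^{d+1} → E`. -/
def projE (d N : ℕ) (v : Lat d) : Cyl d N :=
  (fun i => (v i.castSucc : ZMod N), v (Fin.last d))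

/-- The `2(d+1)` unit vectors `±e_i` of `ℤ^{d+1}`. -/
def unitVecs (d : ℕ) : Finset (Lat d) :=
  Finset.image (fun p : Fin (d + 1) × Bool => Pi.single p.1 (if p.2 then (1 : ℤ) else -1))
    Finset.univ

/-- One-step transition probability of simple random walk on the cylinder:
each of the `2(d+1)` unit moves of `ℤ^{d+1}` is taken with probability `1/(2(d+1))`
and projected to `E`. -/
noncomputable def stepProb (d N : ℕ) (x y : Cyl d N) : ℝ≥0∞ :=
  (((unitVecs d).filter fun e => x + projE d N e = y).card : ℝ≥0∞) / (2 * (d + 1))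

/-- `Pl` is the family of laws (indexed by the starting point) of simple random walk
on the cylinder `E = (ℤ/Nℤ)^d × ℤ`. -/
def IsCylRW (d N : ℕ) (Pl : Cyl d N → Measure (ℕ → Cyl d N)) : Prop :=
  (∀ x, IsProbabilityMeasure (Pl x)) ∧
    ∀ (x : Cyl d N) (n : ℕ) (γ : ℕ → Cyl d N),
      Pl x {ω | ∀ i ≤ n, ω i = γ i} =
        (if γ 0 = x then 1 else 0) * ∏ i ∈ Finset.range n, stepProb d N (γ i) (γ (i + 1))

/-- The lattice `ℤ^ν`. -/
abbrev ZLat (ν : ℕ) := Fin ν → ℤ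

/-- Unit vectors of `ℤ^ν`. -/
def zUnitVecs (ν : ℕ) : Set (ZLat ν) :=
  {v | ∃ i, v = Pi.single i 1 ∨ v = Pi.single i (-1)}

/-- One-step transition probability of simple random walk on `ℤ^ν`. -/
noncomputable def zStep (ν : ℕ) (x y : ZLat ν) : ℝ≥0∞ :=
  if y - x ∈ zUnitVecs ν then (2 * ν : ℝ≥0∞)⁻¹ else 0

/-- `Ql` is the family of laws of simple random walk on `ℤ^ν`. -/
def IsLatRW (ν : ℕ) (Ql : ZLat ν → Measure (ℕ → ZLat ν)) : Prop :=
  (∀ x, IsProbabilityMeasure (Ql x)) ∧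
    ∀ (x : ZLat ν) (n : ℕ) (γ : ℕ → ZLat ν),
      Ql x {ω | ∀ i ≤ n, ω i = γ i} =
        (if γ 0 = x then 1 else 0) * ∏ i ∈ Finset.range n, zStep ν (γ i) (γ (i + 1))

/-- `q(ν)`: the return probability to the origin of simple random walk on `ℤ^ν`. -/
noncomputable def retProb (ν : ℕ) (Ql : ZLat ν → Measure (ℕ → ZLat ν)) : ℝ :=
  ((Ql 0) {ω | ∃ n : ℕ, 1 ≤ n ∧ ω n = 0}).toReal

/-- Entrance time `H_U` (with value `⊤` if `U` is never entered). -/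
noncomputable def entT {X : Type*} (U : Set X) (ω : ℕ → X) : ℕ∞ :=
  sInf {t : ℕ∞ | ∃ n : ℕ, ω n ∈ U ∧ t = n}

/-- Exit time `T_U`. -/
noncomputable def exitT {X : Type*} (U : Set X) (ω : ℕ → X) : ℕ∞ :=
  entT Uᶜ ω

/-- `after t f ω = t + f (θ_t ω)`, with value `⊤` when `t = ⊤`. -/
noncomputable def after {X : Type*} (t : ℕ∞) (f : (ℕ → X) → ℕ∞) (ω : ℕ → X) : ℕ∞ :=
  t.recTopCoe ⊤ fun m => (m : ℕ∞) + f fun k => ω (k + m)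

/-- The block `C_j = (ℤ/Nℤ)^d × ([(j-3/4)N, (j+3/4)N] ∩ ℤ)`. -/
def Cblk (d N : ℕ) (j : ℤ) : Set (Cyl d N) :=
  {x | ((j : ℝ) - 3 / 4) * N ≤ (x.2 : ℝ) ∧ (x.2 : ℝ) ≤ ((j : ℝ) + 3 / 4) * N}

/-- The block `B_j = (ℤ/Nℤ)^d × [(j-1)N, (j+1)N]`. -/
def Bblk (d N : ℕ) (j : ℤ) : Set (Cyl d N) :=
  {x | (j - 1) * (N : ℤ) ≤ x.2 ∧ x.2 ≤ (j + 1) * (N : ℤ)}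

/-- The block `B̃_j = (ℤ/Nℤ)^d × [(j-2)N+1, (j+2)N-1]`. -/
def Btl (d N : ℕ) (j : ℤ) : Set (Cyl d N) :=
  {x | (j - 2) * (N : ℤ) + 1 ≤ x.2 ∧ x.2 ≤ (j + 2) * (N : ℤ) - 1}

/-- `D^j_1`: time of the first departure from `B̃_j` after the first return to `B_j`. -/
noncomputable def oneExc (d N : ℕ) (j : ℤ) (ω : ℕ → Cyl d N) : ℕ∞ :=
  after (entT (Bblk d N j) ω) (exitT (Btl d N j)) ω

/-- `D^j_k`: time of the `k`-th departure from `B̃_j` (after successive returns to `B_j`). -/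
noncomputable def DD (d N : ℕ) (j : ℤ) : ℕ → (ℕ → Cyl d N) → ℕ∞
  | 0, _ => 0
  | k + 1, ω => after (DD d N j k ω) (oneExc d N j) ω

/-- The law `P` of the walk with initial distribution uniform on `B_0`. -/
noncomputable def lawP (d N : ℕ) (Pl : Cyl d N → Measure (ℕ → Cyl d N)) :
    Measure (ℕ → Cyl d N) :=
  ((N : ℝ≥0∞) ^ d * (2 * N + 1))⁻¹ •
    Measure.sum fun x : Cyl d N => if x ∈ Bblk d N 0 then Pl x else 0

/-- Nearest-neighbour adjacency on the cylinder. -/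
def adj (d N : ℕ) (x y : Cyl d N) : Prop :=
  x ≠ y ∧ ∃ e ∈ unitVecs d, y = x + projE d N e

/-- `x` and `y` are connected by a nearest-neighbour path inside `S`. -/
def connIn (d N : ℕ) (S : Set (Cyl d N)) (x y : Cyl d N) : Prop :=
  Relation.ReflTransGen (fun a b => a ∈ S ∧ b ∈ S ∧ adj d N a b) x y

/-- `S` is a connected set. -/
def IsConnIn (d N : ℕ) (S : Set (Cyl d N)) : Prop :=
  ∀ x ∈ S, ∀ y ∈ S, connIn d N S x y

/-- The boundary `∂U`. -/
def bdry (d N : ℕ) (U : Set (Cyl d N)) : Set (Cyl d N) :=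
  {x | x ∉ U ∧ ∃ y ∈ U, adj d N x y}

/-- `ℓ^∞`-norm on `ℤ^{d+1}`. -/
def linf {d : ℕ} (v : Lat d) : ℕ := Finset.univ.sup fun i => (v i).natAbs

/-- `ℓ^∞`-distance induced on the cylinder. -/
noncomputable def cylDist (d N : ℕ) (x y : Cyl d N) : ℕ :=
  sInf {r : ℕ | ∃ v : Lat d, projE d N v = y - x ∧ linf v = r}

/-- `S` has `ℓ^∞`-diameter at least `L`. -/
def diamGE (d N : ℕ) (S : Set (Cyl d N)) (L : ℕ) : Prop :=
  ∃ x ∈ S, ∃ y ∈ S, L ≤ cylDist d N x y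

/-- `X_{[0,n]}`: the set of points visited up to time `n`. -/
def ran {X : Type*} (ω : ℕ → X) (n : ℕ) : Set X := {y | ∃ i ≤ n, ω i = y}

/-- The set of points visited up to the (possibly infinite) time `t`. -/
def ranE {X : Type*} (ω : ℕ → X) (t : ℕ∞) : Set X :=
  {y | ∃ i : ℕ, (i : ℕ∞) ≤ t ∧ ω i = y}

/-- `L_m`: projections to `E` of `m`-dimensional affine coordinate lattices of `ℤ^{d+1}`. -/
def Lcoll (d N m : ℕ) : Set (Set (Cyl d N)) :=
  {F | ∃ I : Finset (Fin (d + 1)), I.card = m ∧ ∃ y : Lat d,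
      F = (fun v => projE d N (y + v)) '' {v : Lat d | ∀ i ∉ I, v i = 0}}

/-- `A^j_m`: nonempty subsets of `C_j` contained in some `F ∈ L_m`. -/
def Adm (d N : ℕ) (j : ℤ) (m : ℕ) : Set (Finset (Cyl d N)) :=
  {A | A.Nonempty ∧ ↑A ⊆ Cblk d N j ∧ ∃ F ∈ Lcoll d N m, (↑A : Set (Cyl d N)) ⊆ F}

/-- The segment `{x + k·e : 0 ≤ k ≤ L}` (addition via `π_E`). -/
def segment (d N : ℕ) (x : Cyl d N) (e : Lat d) (L : ℕ) : Set (Cyl d N) :=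
  {y | ∃ k : ℕ, k ≤ L ∧ y = x + projE d N ((k : ℤ) • e)}

/-- The event `V_{K,j,t}` (with `k = ⌊t⌋` excursions). -/
def Vev (d N : ℕ) (K : ℝ) (j : ℤ) (k : ℕ) : Set (ℕ → Cyl d N) :=
  {ω | ∀ x ∈ Cblk d N j, ∀ e ∈ unitVecs d, ∃ i : ℕ, (i : ℝ) < Real.sqrt N ∧
      ∀ l : ℕ, i ≤ l → l ≤ i + ⌊K * Real.log N⌋₊ →
        x + projE d N ((l : ℤ) • e) ∉ ranE ω (DD d N j k ω)}

/-- The event `U_{K,j,t}` (with `k = ⌊t⌋` excursions). -/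
def Uev (d N : ℕ) (K : ℝ) (j : ℤ) (k : ℕ) : Set (ℕ → Cyl d N) :=
  {ω | ∀ F ∈ Lcoll d N 2, ∀ n : ℕ, (n : ℕ∞) ≤ DD d N j k ω →
      ∀ O₁ O₂ : Set (Cyl d N),
        O₁ ⊆ (F ∩ Cblk d N j) \ ran ω n → O₂ ⊆ (F ∩ Cblk d N j) \ ran ω n →
        IsConnIn d N O₁ → IsConnIn d N O₂ →
        diamGE d N O₁ ⌊K * Real.log N⌋₊ → diamGE d N O₂ ⌊K * Real.log N⌋₊ →
        ∀ p ∈ O₁, ∀ q ∈ O₂, connIn d N ((F ∩ Cblk d N j) \ ran ω n) p q}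

/-- A (finite) set `S` disconnects the cylinder. -/
def Disconnects (d N : ℕ) (S : Set (Cyl d N)) : Prop :=
  S.Finite ∧ ∃ M₀ : ℕ, ∀ M : ℕ, M₀ ≤ M → ∀ x y : Cyl d N,
    (M : ℤ) ≤ x.2 → y.2 ≤ -(M : ℤ) → ¬ connIn d N Sᶜ x y

/-- The disconnection time `T_N`. -/
noncomputable def discT (d N : ℕ) (ω : ℕ → Cyl d N) : ℕ∞ :=
  sInf {t : ℕ∞ | ∃ n : ℕ, Disconnects d N (ran ω n) ∧ t = n}

/-- `r ≤ t` for `t : ℕ∞` and a real threshold `r` (trivially true when `t = ⊤`). -/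
def geReal (t : ℕ∞) (r : ℝ) : Prop := ∀ n : ℕ, t = (n : ℕ∞) → r ≤ n

/-- `r < t` for `t : ℕ∞` and a real threshold `r` (trivially true when `t = ⊤`). -/
def gtReal (t : ℕ∞) (r : ℝ) : Prop := ∀ n : ℕ, t = (n : ℕ∞) → r < n

/-- `φ_j(z) = E_z[exp(λ Σ_{x∈A} 1{H_x < T_{B̃_j}})]`. -/
noncomputable def phi (d N : ℕ) (Pl : Cyl d N → Measure (ℕ → Cyl d N)) (j : ℤ) (lam : ℝ)
    (A : Finset (Cyl d N)) (z : Cyl d N) : ℝ :=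
  ∫ ω, Real.exp (lam * ∑ x ∈ A, if entT {x} ω < exitT (Btl d N j) ω then (1 : ℝ) else 0)
    ∂(Pl z)

/-- `‖φ_j‖_∞`. -/
noncomputable def phiSup (d N : ℕ) (Pl : Cyl d N → Measure (ℕ → Cyl d N)) (j : ℤ) (lam : ℝ)
    (A : Finset (Cyl d N)) : ℝ :=
  ⨆ z : Cyl d N, phi d N Pl j lam A z

/-- `q_N = sup {P_z[H_F < T_{B̃_j}] : F ∈ L_m, z ∈ ∂F}`. -/
noncomputable def qNval (d N m : ℕ) (Pl : Cyl d N → Measure (ℕ → Cyl d N)) (j : ℤ) : ℝ :=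
  sSup {r : ℝ | ∃ F ∈ Lcoll d N m, ∃ z ∈ bdry d N F,
      r = ((Pl z) {ω | entT F ω < exitT (Btl d N j) ω}).toReal}

/-- The times `τ_k`: `τ_0` is the entrance time of `(ℤ/Nℤ)^d × Nℤ`, and `τ_{k+1}` is the
first time after `τ_k` at which the vertical component has moved by exactly `N`. -/
noncomputable def tauT (d N : ℕ) : ℕ → (ℕ → Cyl d N) → ℕ∞
  | 0, ω => entT {x : Cyl d N | (N : ℤ) ∣ x.2} ω
  | k + 1, ω =>
      (tauT d N k ω).recTopCoe ⊤ fun m =>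
        sInf {t : ℕ∞ | ∃ n : ℕ, m < n ∧ ((ω n).2 - (ω m).2).natAbs = N ∧ t = n}

/-- `*`-adjacency on `ℤ²`. -/
def starAdj (x y : ℤ × ℤ) : Prop :=
  x ≠ y ∧ (x.1 - y.1).natAbs ≤ 1 ∧ (x.2 - y.2).natAbs ≤ 1


/-!
Write `φ = φ_j`, `s = ‖φ‖_∞`, and let `D` be the event that the walk hits `F` before leaving
`B̃_j`. Outside `D` no point of `A ⊆ F` is visited, so the strong Markov property at the entrance
time of `F` gives `φ(z) ≤ 1 + P_z[D] (b - 1)` whenever `φ ≤ b` on `F`. With `b = s` this bounds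
`φ` by `1 + q_N (s - 1)` on `∂F`. A point `x ∈ F` has `2m` neighbours in `F` and `2(d + 1 - m)`
in `∂F`, and one step of the Markov property costs at most a factor `e^λ`, so
`φ(x) ≤ e^λ (m/(d+1) · s + (1 - m/(d+1)) (1 + q_N (s - 1))) =: R` on `F`. Applying the first
bound again with `b = R` gives `s ≤ R`, which rearranges to the claim since `e^λ m < d + 1`.
-/

section HittingTimes

variable {X : Type*} {U V : Set X} {ω : ℕ → X}

lemma entT_le_coe {n : ℕ} (h : ω n ∈ U) : entT U ω ≤ n := sInf_le ⟨n, h, rfl⟩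

lemma coe_lt_entT_iff {n : ℕ} : (n : ℕ∞) < entT U ω ↔ ∀ i ≤ n, ω i ∉ U := by
  refine ⟨fun h i hi hiU => (h.trans_le (entT_le_coe hiU)).not_ge (by exact_mod_cast hi),
    fun h => (ENat.natCast_lt_natCast.mpr n.lt_succ_self).trans_le (le_sInf ?_)⟩
  rintro t ⟨k, hk, rfl⟩
  exact_mod_cast Nat.lt_of_not_le fun hkn => h k hkn hk

lemma entT_lt_exitT_iff : entT U ω < exitT V ω ↔ ∃ n, ω n ∈ U ∧ ∀ i ≤ n, ω i ∈ V := by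
  constructor
  · intro h
    obtain ⟨t, ⟨n, hn, rfl⟩, hlt⟩ := sInf_lt_iff.mp h
    exact ⟨n, hn, fun i hi => not_not.mp (coe_lt_entT_iff.mp hlt i hi)⟩
  · rintro ⟨n, hn, hV⟩
    exact (entT_le_coe hn).trans_lt (coe_lt_entT_iff.mpr fun i hi => not_not.mpr (hV i hi))

end HittingTimes

section Paths

variable {X : Type*}

def pathCyl (γ : ℕ → X) (n : ℕ) : Set (ℕ → X) := {ω | ∀ i ≤ n, ω i = γ i}

def shift (n : ℕ) (ω : ℕ → X) : ℕ → X := fun k => ω (k + n)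

lemma isPiSystem_pathCyl : IsPiSystem {s : Set (ℕ → X) | ∃ γ n, s = pathCyl γ n} := by
  rintro _ ⟨γ, n, rfl⟩ _ ⟨δ, m, rfl⟩ ⟨ω, hωγ, hωδ⟩
  wlog hnm : n ≤ m generalizing γ δ n m
  · exact Set.inter_comm _ _ ▸ this δ m γ n hωδ hωγ (by omega)
  refine ⟨δ, m, Set.inter_eq_right.mpr fun ω' h' i hi => ?_⟩
  rw [h' i (hi.trans hnm), ← hωδ i (hi.trans hnm), hωγ i hi]

def splice (γ : ℕ → X) (n : ℕ) (δ : ℕ → X) : ℕ → X := fun i => if i ≤ n then γ i else δ (i - n)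

lemma splice_add {γ δ : ℕ → X} {n : ℕ} (h : δ 0 = γ n) (k : ℕ) : splice γ n δ (n + k) = δ k := by
  unfold splice
  split_ifs with hk
  · obtain rfl : k = 0 := by omega
    exact h.symm
  · simp

lemma shift_preimage_pathCyl_inter_pathCyl {γ δ : ℕ → X} {n m : ℕ} (h : δ 0 = γ n) :
    shift n ⁻¹' pathCyl δ m ∩ pathCyl γ n = pathCyl (splice γ n δ) (n + m) := by
  ext ω
  simp only [Set.mem_inter_iff, Set.mem_preimage, pathCyl, shift, Set.mem_ofPred_eq]
  refine ⟨fun ⟨hδ, hγ⟩ i hi => ?_, fun h' => ⟨fun k hk => ?_, fun i hi => ?_⟩⟩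
  · by_cases hin : i ≤ n
    · simp [splice, hin, hγ i hin]
    · obtain ⟨k, rfl⟩ := Nat.exists_eq_add_of_le (Nat.le_of_not_le hin)
      rw [splice_add h, ← hδ k (by omega), add_comm]
  · rw [← splice_add h, ← h' (n + k) (by omega), add_comm]
  · simpa [splice, hi] using h' i (by omega)

lemma shift_preimage_pathCyl_inter_pathCyl_eq_empty {γ δ : ℕ → X} {n m : ℕ} (h : δ 0 ≠ γ n) :
    shift n ⁻¹' pathCyl δ m ∩ pathCyl γ n = ∅ :=
  Set.eq_empty_of_forall_notMem fun ω ⟨hδ, hγ⟩ =>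
    h (by rw [← hδ 0 (Nat.zero_le m), ← hγ n le_rfl, shift, zero_add])

def extendFin {n : ℕ} (g : Fin (n + 1) → X) : ℕ → X := fun k => g ⟨min k n, by omega⟩

lemma mem_pathCyl_extendFin {n : ℕ} {g : Fin (n + 1) → X} {ω : ℕ → X} :
    ω ∈ pathCyl (extendFin g) n ↔ ∀ i : Fin (n + 1), ω i = g i := by
  refine ⟨fun h i => ?_, fun h i hi => ?_⟩
  · rw [h i (by omega), extendFin]
    congr
    omega
  · rw [h ⟨i, by omega⟩, extendFin]
    congr
    omega

lemma pairwise_disjoint_pathCyl_extendFin (n : ℕ) :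
    Pairwise (Function.onFun Disjoint fun g : Fin (n + 1) → X => pathCyl (extendFin g) n) := by
  refine fun g g' hne => Set.disjoint_left.mpr fun ω h h' => hne (funext fun i => ?_)
  rw [← mem_pathCyl_extendFin.mp h i, mem_pathCyl_extendFin.mp h' i]

lemma eq_iUnion_pathCyl {B : Set (ℕ → X)} {n : ℕ} (hB : DependsOn (· ∈ B) (Set.Iic n)) :
    B = ⋃ g : {g : Fin (n + 1) → X // extendFin g ∈ B}, pathCyl (extendFin g.1) n := by
  ext ω
  simp only [Set.mem_iUnion, Subtype.exists, exists_prop]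
  refine ⟨fun h => ⟨fun i => ω i, ?_, ?_⟩, fun ⟨g, hg, hω⟩ => ?_⟩
  · refine (hB fun i hi => ?_).mp h
    simp only [Set.mem_Iic] at hi
    simp [extendFin, min_eq_left hi]
  · exact mem_pathCyl_extendFin.mpr fun i => rfl
  · exact (hB fun i hi => (hω i hi).symm).mp hg

end Paths

section MarkovChain

variable {X : Type*} [MeasurableSpace X]

def IsMarkovLaw (p : X → X → ℝ≥0∞) (P : X → Measure (ℕ → X)) : Prop :=
  ∀ (x : X) (n : ℕ) (γ : ℕ → X), P x {ω | ∀ i ≤ n, ω i = γ i} =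
    (if γ 0 = x then 1 else 0) * ∏ i ∈ Finset.range n, p (γ i) (γ (i + 1))

lemma measurable_shift (n : ℕ) : Measurable (shift (X := X) n) :=
  measurable_pi_lambda _ fun k => measurable_pi_apply (k + n)

variable {p : X → X → ℝ≥0∞} {P : X → Measure (ℕ → X)}

lemma IsMarkovLaw.measure_pathCyl (hP : IsMarkovLaw p P) (x : X) (γ : ℕ → X) (n : ℕ) :
    P x (pathCyl γ n) = (if γ 0 = x then 1 else 0) * ∏ i ∈ Finset.range n, p (γ i) (γ (i + 1)) :=
  hP x n γ

lemma IsMarkovLaw.measure_pathCyl_splice (hP : IsMarkovLaw p P) (z : X) {γ δ : ℕ → X} {n : ℕ}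
    (m : ℕ) (h : δ 0 = γ n) :
    P z (pathCyl (splice γ n δ) (n + m)) = P z (pathCyl γ n) * P (γ n) (pathCyl δ m) := by
  have hpre : ∀ i ∈ Finset.range n, p (splice γ n δ i) (splice γ n δ (i + 1)) =
      p (γ i) (γ (i + 1)) := fun i hi => by
    simp only [Finset.mem_range] at hi
    simp [splice, hi.le, Nat.succ_le_of_lt hi]
  have hpost : ∀ k ∈ Finset.range m, p (splice γ n δ (n + k)) (splice γ n δ (n + k + 1)) =
      p (δ k) (δ (k + 1)) := fun k _ => by rw [splice_add h, add_assoc, splice_add h]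
  have hstart : splice γ n δ 0 = γ 0 := by simp [splice]
  rw [hP.measure_pathCyl, hP.measure_pathCyl, hP.measure_pathCyl, Finset.prod_range_add,
    Finset.prod_congr rfl hpre, Finset.prod_congr rfl hpost, if_pos h, hstart]
  ring

variable [MeasurableSingletonClass X]

lemma measurableSet_pathCyl (γ : ℕ → X) (n : ℕ) : MeasurableSet (pathCyl γ n) := by
  simp only [pathCyl, Set.ofPred_forall]
  exact .iInter fun i => .iInter fun _ =>
    show MeasurableSet ((fun ω : ℕ → X => ω i) ⁻¹' {γ i}) from
      measurable_pi_apply i (measurableSet_singleton (γ i))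

variable [∀ x, IsProbabilityMeasure (P x)]

lemma IsMarkovLaw.measure_setOf_one (hP : IsMarkovLaw p P) (z y : X) :
    P z {ω | ω 1 = y} = p z y := by
  have hstart : P z {ω | ω 0 = z}ᶜ = 0 := by
    have : {ω : ℕ → X | ω 0 = z} = pathCyl (fun _ => z) 0 := by ext; simp [pathCyl]
    rw [this, prob_compl_eq_zero_iff (measurableSet_pathCyl _ _), hP.measure_pathCyl]
    simp
  have hcyl : {ω : ℕ → X | ω 1 = y} ∩ {ω | ω 0 = z} =
      pathCyl (fun i => if i = 0 then z else y) 1 := by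
    ext ω
    simp only [pathCyl, Set.mem_inter_iff, Set.mem_ofPred_eq, Nat.le_one_iff_eq_zero_or_eq_one]
    aesop
  rw [← measure_inter_conull hstart, hcyl, hP.measure_pathCyl]
  simp

variable [Countable X]

lemma generateFrom_pathCyl :
    (inferInstance : MeasurableSpace (ℕ → X)) =
      .generateFrom {s | ∃ γ n, s = pathCyl γ n} := by
  refine le_antisymm (iSup_le fun i => Measurable.comap_le ?_)
    (MeasurableSpace.generateFrom_le fun _ ⟨γ, n, hs⟩ => hs ▸ measurableSet_pathCyl γ n)
  refine @measurable_to_countable' _ _ _ _ (.generateFrom _) _ fun x => ?_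
  have hdep : DependsOn (· ∈ (fun ω : ℕ → X => ω i) ⁻¹' {x}) (Set.Iic i) :=
    fun ω ω' h => by simp [h i Set.self_mem_Iic]
  rw [eq_iUnion_pathCyl hdep]
  exact .iUnion fun g => .basic _ ⟨_, i, rfl⟩

theorem IsMarkovLaw.map_shift_restrict_pathCyl (hP : IsMarkovLaw p P) (z : X) (γ : ℕ → X)
    (n : ℕ) : ((P z).restrict (pathCyl γ n)).map (shift n) = P z (pathCyl γ n) • P (γ n) := by
  refine ext_of_generate_finite _ generateFrom_pathCyl isPiSystem_pathCyl ?_ ?_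
  · rintro _ ⟨δ, m, rfl⟩
    rw [Measure.map_apply (measurable_shift n) (measurableSet_pathCyl δ m),
      Measure.restrict_apply (measurable_shift n (measurableSet_pathCyl δ m)),
      Measure.smul_apply, smul_eq_mul]
    by_cases h : δ 0 = γ n
    · rw [shift_preimage_pathCyl_inter_pathCyl h, hP.measure_pathCyl_splice z m h]
    · rw [shift_preimage_pathCyl_inter_pathCyl_eq_empty h, hP.measure_pathCyl (γ n), if_neg h]
      simp
  · simp [Measure.map_apply (measurable_shift n) .univ]

theorem IsMarkovLaw.setLIntegral_comp_shift (hP : IsMarkovLaw p P) {B : Set (ℕ → X)} {n : ℕ}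
    (hB : DependsOn (· ∈ B) (Set.Iic n)) {f : (ℕ → X) → ℝ≥0∞} (hf : Measurable f) (z : X) :
    ∫⁻ ω in B, f (shift n ω) ∂P z = ∫⁻ ω in B, ∫⁻ ω', f ω' ∂P (ω n) ∂P z := by
  have hdisj : Pairwise (Function.onFun Disjoint
      fun g : {g : Fin (n + 1) → X // extendFin g ∈ B} => pathCyl (extendFin g.1) n) :=
    fun g g' hne => pairwise_disjoint_pathCyl_extendFin n (Subtype.val_injective.ne hne)
  rw [eq_iUnion_pathCyl hB, lintegral_iUnion (fun _ => measurableSet_pathCyl _ _) hdisj,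
    lintegral_iUnion (fun _ => measurableSet_pathCyl _ _) hdisj]
  refine tsum_congr fun g => ?_
  rw [← lintegral_map hf (measurable_shift n), hP.map_shift_restrict_pathCyl,
    lintegral_smul_measure, setLIntegral_congr_fun (measurableSet_pathCyl _ _)
      fun ω hω => by rw [hω n le_rfl], setLIntegral_const, smul_eq_mul, mul_comm]

theorem IsMarkovLaw.lintegral_comp_shift_one (hP : IsMarkovLaw p P) {f : (ℕ → X) → ℝ≥0∞}
    (hf : Measurable f) (z : X) :
    ∫⁻ ω, f (shift 1 ω) ∂P z = ∑' y, p z y * ∫⁻ ω, f ω ∂P y := by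
  have h := hP.setLIntegral_comp_shift (B := Set.univ) (n := 1) (fun _ _ _ => rfl) hf z
  simp only [Measure.restrict_univ] at h
  have hmap := lintegral_map (μ := P z) (f := fun y => ∫⁻ ω, f ω ∂P y) .of_discrete
    (measurable_pi_apply 1)
  rw [h, ← hmap, lintegral_countable']
  refine tsum_congr fun y => ?_
  rw [Measure.map_apply (measurable_pi_apply 1) (measurableSet_singleton y), mul_comm]
  exact congrArg (· * _) (hP.measure_setOf_one z y)

end MarkovChain

section Visits

variable {X : Type*}

def hitAt (F V : Set X) (n : ℕ) : Set (ℕ → X) :=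
  {ω | ω n ∈ F ∧ (∀ i < n, ω i ∉ F) ∧ ∀ i ≤ n, ω i ∈ V}

lemma setOf_entT_lt_exitT_eq_iUnion_hitAt (F V : Set X) :
    {ω | entT F ω < exitT V ω} = ⋃ n, hitAt F V n := by
  ext ω
  simp only [Set.mem_ofPred_eq, entT_lt_exitT_iff, Set.mem_iUnion, hitAt]
  refine ⟨fun ⟨k, hk, hV⟩ => ?_, fun ⟨n, hn, _, hV⟩ => ⟨n, hn, hV⟩⟩
  have h : ∃ n, ω n ∈ F := ⟨k, hk⟩
  exact ⟨Nat.find h, Nat.find_spec h, fun i hi => Nat.find_min h hi,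
    fun i hi => hV i (hi.trans (Nat.find_min' h hk))⟩

lemma pairwise_disjoint_hitAt (F V : Set X) : Pairwise (Function.onFun Disjoint (hitAt F V)) := by
  intro n k hne
  refine Set.disjoint_left.mpr fun ω ⟨hn, hn', _⟩ ⟨hk, hk', _⟩ => ?_
  rcases lt_or_gt_of_ne hne with h | h
  exacts [hk' n h hn, hn' k h hk]

lemma dependsOn_hitAt (F V : Set X) (n : ℕ) : DependsOn (· ∈ hitAt F V n) (Set.Iic n) := by
  intro ω ω' h
  have h' : ∀ i ≤ n, ω i = ω' i := fun i hi => h i hi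
  simp only [hitAt, Set.mem_ofPred_eq, eq_iff_iff]
  refine and_congr (by rw [h' n le_rfl]) (and_congr ?_ ?_)
  · exact forall₂_congr fun i hi => by rw [h' i hi.le]
  · exact forall₂_congr fun i hi => by rw [h' i hi]

noncomputable def visitCount (V : Set X) (A : Finset X) (ω : ℕ → X) : ℕ :=
  (A.filter fun x => entT {x} ω < exitT V ω).card

variable {V F : Set X} {A : Finset X}

lemma visitCount_le_visitCount_shift_one_add_one (ω : ℕ → X) :
    visitCount V A ω ≤ visitCount V A (shift 1 ω) + 1 := by
  refine (Finset.card_le_card fun x hx => ?_).trans (Finset.card_insert_le (ω 0) _)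
  simp only [Finset.mem_filter, Finset.mem_insert] at hx ⊢
  obtain ⟨hxA, hlt⟩ := hx
  obtain ⟨_ | k, hk, hV⟩ := entT_lt_exitT_iff.mp hlt
  · exact .inl hk.symm
  · exact .inr ⟨hxA, entT_lt_exitT_iff.mpr ⟨k, hk, fun i hi => hV (i + 1) (by omega)⟩⟩

lemma visitCount_le_visitCount_shift (hAF : ↑A ⊆ F) {n : ℕ} {ω : ℕ → X}
    (h : ω ∈ hitAt F V n) : visitCount V A ω ≤ visitCount V A (shift n ω) := by
  refine Finset.card_le_card fun x hx => ?_
  simp only [Finset.mem_filter] at hx ⊢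
  obtain ⟨hxA, hlt⟩ := hx
  obtain ⟨k, hk, hV⟩ := entT_lt_exitT_iff.mp hlt
  have hnk : n ≤ k := not_lt.mp fun hkn => h.2.1 k hkn (hk ▸ hAF hxA)
  refine ⟨hxA, entT_lt_exitT_iff.mpr ⟨k - n, ?_, fun i hi => hV (i + n) (by omega)⟩⟩
  rwa [shift, Nat.sub_add_cancel hnk]

lemma visitCount_eq_zero (hAF : ↑A ⊆ F) {ω : ℕ → X} (h : ¬ entT F ω < exitT V ω) :
    visitCount V A ω = 0 := by
  refine Finset.card_eq_zero.mpr (Finset.filter_eq_empty_iff.mpr fun x hx hlt => h ?_)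
  obtain ⟨n, hn, hV⟩ := entT_lt_exitT_iff.mp hlt
  exact entT_lt_exitT_iff.mpr ⟨n, hn ▸ hAF hx, hV⟩

variable [MeasurableSpace X]

noncomputable def visitMGF (P : X → Measure (ℕ → X)) (V : Set X) (A : Finset X) (lam : ℝ)
    (z : X) : ℝ≥0∞ :=
  ∫⁻ ω, ENNReal.ofReal (Real.exp (lam * visitCount V A ω)) ∂P z

variable {p : X → X → ℝ≥0∞} {P : X → Measure (ℕ → X)} [∀ x, IsProbabilityMeasure (P x)]
  {lam : ℝ}

lemma one_le_visitMGF (hlam : 0 ≤ lam) (z : X) : 1 ≤ visitMGF P V A lam z := by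
  refine le_of_eq_of_le (by simp) (lintegral_mono fun ω => ?_ : ∫⁻ _, 1 ∂P z ≤ _)
  exact ENNReal.one_le_ofReal.mpr (Real.one_le_exp (by positivity))

lemma visitMGF_le_exp_mul_card (hlam : 0 ≤ lam) (z : X) :
    visitMGF P V A lam z ≤ ENNReal.ofReal (Real.exp (lam * A.card)) := by
  refine (lintegral_mono fun ω => ?_).trans_eq (by rw [lintegral_const, measure_univ, mul_one])
  gcongr
  exact Finset.card_filter_le _ _

variable [Countable X] [MeasurableSingletonClass X]

lemma measurableSet_of_dependsOn {B : Set (ℕ → X)} {n : ℕ} (hB : DependsOn (· ∈ B) (Set.Iic n)) :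
    MeasurableSet B :=
  eq_iUnion_pathCyl hB ▸ .iUnion fun _ => measurableSet_pathCyl _ _

lemma measurableSet_hitAt (F V : Set X) (n : ℕ) : MeasurableSet (hitAt F V n) :=
  measurableSet_of_dependsOn (dependsOn_hitAt F V n)

lemma measurableSet_entT_lt_exitT (F V : Set X) : MeasurableSet {ω | entT F ω < exitT V ω} :=
  setOf_entT_lt_exitT_eq_iUnion_hitAt F V ▸ .iUnion (measurableSet_hitAt F V)

lemma measurable_visitCount (V : Set X) (A : Finset X) : Measurable (visitCount V A) := by
  have h : visitCount V A = fun ω => ∑ x ∈ A, if entT {x} ω < exitT V ω then 1 else 0 :=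
    funext fun ω => Finset.card_filter _ _
  rw [h]
  exact Finset.measurable_sum _ fun x _ =>
    Measurable.ite (measurableSet_entT_lt_exitT _ _) measurable_const measurable_const

lemma measurable_exp_visitCount (V : Set X) (A : Finset X) (lam : ℝ) :
    Measurable fun ω => ENNReal.ofReal (Real.exp (lam * visitCount V A ω)) :=
  (measurable_from_nat (f := fun k : ℕ => ENNReal.ofReal (Real.exp (lam * k)))).comp
    (measurable_visitCount V A)

theorem IsMarkovLaw.visitMGF_le_add_mul_of_forall_mem_le (hP : IsMarkovLaw p P)
    (hlam : 0 ≤ lam) (hAF : ↑A ⊆ F) {b : ℝ≥0∞} (hb : ∀ x ∈ F, visitMGF P V A lam x ≤ b)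
    (z : X) :
    visitMGF P V A lam z ≤
      P z {ω | entT F ω < exitT V ω}ᶜ + P z {ω | entT F ω < exitT V ω} * b := by
  have hD := measurableSet_entT_lt_exitT F V
  have hf := measurable_exp_visitCount V A lam
  rw [visitMGF, ← lintegral_add_compl _ hD, add_comm]
  gcongr ?_ + ?_
  · rw [setLIntegral_congr_fun hD.compl fun ω hω => by rw [visitCount_eq_zero hAF hω]]
    simp
  · rw [setOf_entT_lt_exitT_eq_iUnion_hitAt,
      lintegral_iUnion (measurableSet_hitAt F V) (pairwise_disjoint_hitAt F V),
      measure_iUnion (pairwise_disjoint_hitAt F V) (measurableSet_hitAt F V),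
      ← ENNReal.tsum_mul_right]
    refine ENNReal.tsum_le_tsum fun n => ?_
    calc ∫⁻ ω in hitAt F V n, ENNReal.ofReal (Real.exp (lam * visitCount V A ω)) ∂P z
        ≤ ∫⁻ ω in hitAt F V n, ENNReal.ofReal (Real.exp (lam * visitCount V A (shift n ω))) ∂P z :=
          setLIntegral_mono (hf.comp (measurable_shift n)) fun ω hω => by
            gcongr
            exact visitCount_le_visitCount_shift hAF hω
      _ = ∫⁻ ω in hitAt F V n, visitMGF P V A lam (ω n) ∂P z :=
          hP.setLIntegral_comp_shift (dependsOn_hitAt F V n) hf z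
      _ ≤ ∫⁻ _ in hitAt F V n, b ∂P z := setLIntegral_mono measurable_const fun ω hω => hb _ hω.1
      _ = P z (hitAt F V n) * b := by rw [setLIntegral_const, mul_comm]

theorem IsMarkovLaw.visitMGF_le_exp_mul_tsum (hP : IsMarkovLaw p P) (hlam : 0 ≤ lam) (z : X) :
    visitMGF P V A lam z ≤ ENNReal.ofReal (Real.exp lam) * ∑' y, p z y * visitMGF P V A lam y := by
  have hf := measurable_exp_visitCount V A lam
  calc visitMGF P V A lam z
      ≤ ∫⁻ ω, ENNReal.ofReal (Real.exp lam) *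
          ENNReal.ofReal (Real.exp (lam * visitCount V A (shift 1 ω))) ∂P z := by
        refine lintegral_mono fun ω => ?_
        rw [← ENNReal.ofReal_mul (Real.exp_pos _).le, ← Real.exp_add]
        have h : (visitCount V A ω : ℝ) ≤ visitCount V A (shift 1 ω) + 1 := by
          exact_mod_cast visitCount_le_visitCount_shift_one_add_one ω
        gcongr
        nlinarith
    _ = _ := by
        rw [lintegral_const_mul' _ _ ENNReal.ofReal_ne_top, hP.lintegral_comp_shift_one hf]
        rfl

end Visits

section Cylinder

variable {d N : ℕ}

instance (N : ℕ) : MeasurableSingletonClass (ZMod N) := ⟨fun _ => trivial⟩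

def unitVec (d : ℕ) (q : Fin (d + 1) × Bool) : Lat d := Pi.single q.1 (if q.2 then 1 else -1)

lemma unitVecs_eq_image : unitVecs d = Finset.univ.image (unitVec d) := rfl

lemma unitVec_injective : Function.Injective (unitVec d) := by
  rintro ⟨i, b⟩ ⟨i', b'⟩ h
  obtain rfl : i = i' := by
    by_contra hne
    have := congrFun h i
    cases b <;> simp [unitVec, hne] at this
  have := congrFun h i
  cases b <;> cases b' <;> simp_all [unitVec]

lemma tsum_stepProb_mul (z : Cyl d N) (h : Cyl d N → ℝ≥0∞) :
    ∑' y, stepProb d N z y * h y =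
      (2 * ((d : ℝ≥0∞) + 1))⁻¹ * ∑ q : Fin (d + 1) × Bool, h (z + projE d N (unitVec d q)) := by
  have hstep : ∀ y, stepProb d N z y * h y =
      (2 * ((d : ℝ≥0∞) + 1))⁻¹ *
        ∑ e ∈ unitVecs d, if y = z + projE d N e then h (z + projE d N e) else 0 :=
    fun y => by
      rw [stepProb, Finset.card_filter, Nat.cast_sum, ENNReal.div_eq_inv_mul, mul_assoc,
        Finset.sum_mul]
      congr 1
      refine Finset.sum_congr rfl fun e _ => ?_
      split_ifs <;> simp_all
  rw [tsum_congr hstep, ENNReal.tsum_mul_left,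
    Summable.tsum_finsetSum fun _ _ => ENNReal.summable]
  simp_rw [tsum_ite_eq]
  rw [unitVecs_eq_image, Finset.sum_image fun _ _ _ _ h => unitVec_injective h]

lemma projE_add (v w : Lat d) : projE d N (v + w) = projE d N v + projE d N w := by
  ext <;> simp [projE]

lemma projE_zero : projE d N (0 : Lat d) = 0 := by
  ext <;> simp [projE]

lemma projE_sub (v w : Lat d) : projE d N (v - w) = projE d N v - projE d N w := by
  ext <;> simp [projE]

lemma natCast_dvd_of_projE_eq_zero {v : Lat d} (h : projE d N v = 0) (i : Fin (d + 1)) :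
    (N : ℤ) ∣ v i := by
  induction i using Fin.lastCases with
  | last => simp [show v (Fin.last d) = 0 from congrArg Prod.snd h]
  | cast k => exact (ZMod.intCast_zmod_eq_zero_iff_dvd _ N).mp (congrFun (congrArg Prod.fst h) k)

def coordLattice (d N : ℕ) (I : Finset (Fin (d + 1))) (y : Lat d) : Set (Cyl d N) :=
  (fun v => projE d N (y + v)) '' {v : Lat d | ∀ i ∉ I, v i = 0}

variable {I : Finset (Fin (d + 1))} {y : Lat d} {x : Cyl d N}

lemma add_projE_unitVec_notMem_coordLattice (hN : 2 ≤ N) (hx : x ∈ coordLattice d N I y)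
    {q : Fin (d + 1) × Bool} (hq : q.1 ∉ I) :
    x + projE d N (unitVec d q) ∉ coordLattice d N I y := by
  rintro ⟨w, hw, hxw⟩
  obtain ⟨v, hv, rfl⟩ := hx
  have h0 : projE d N (w - v - unitVec d q) = 0 := by
    rw [show w - v - unitVec d q = y + w - (y + v) - unitVec d q by abel, projE_sub, projE_sub]
    exact sub_eq_zero.mpr (sub_eq_iff_eq_add'.mpr hxw)
  have hdvd := natCast_dvd_of_projE_eq_zero h0 q.1
  have hle : (N : ℤ) ≤ 1 := by
    cases hb : q.2 <;> simp [unitVec, hv _ hq, hw _ hq, hb] at hdvd <;>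
      exact Int.le_of_dvd one_pos hdvd
  omega

lemma add_projE_unitVec_mem_bdry (hN : 2 ≤ N) (hx : x ∈ coordLattice d N I y)
    {q : Fin (d + 1) × Bool} (hq : q.1 ∉ I) :
    x + projE d N (unitVec d q) ∈ bdry d N (coordLattice d N I y) := by
  obtain ⟨i, b⟩ := q
  have hout := add_projE_unitVec_notMem_coordLattice hN hx hq
  have hback : unitVec d (i, b) + unitVec d (i, !b) = 0 := by
    cases b <;> simp [unitVec, ← Pi.single_add]
  refine ⟨hout, x, hx, fun h => hout (by rwa [h]), unitVec d (i, !b),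
    Finset.mem_image_of_mem _ (Finset.mem_univ _), ?_⟩
  rw [add_assoc, ← projE_add, hback, projE_zero, add_zero]

end Cylinder

lemma sum_ite_mem_fst {ι : Type*} [Fintype ι] [DecidableEq ι] (I : Finset ι) (u w : ℝ) :
    ∑ r : ι × Bool, (if r.1 ∈ I then u else w) =
      2 * (I.card * u + (Fintype.card ι - I.card) * w) := by
  rw [Fintype.sum_prod_type]
  simp only [Fintype.sum_bool, ← two_mul, ← Finset.mul_sum]
  rw [Finset.sum_ite, Finset.sum_const, Finset.sum_const, Finset.filter_univ_mem]
  simp [Finset.filter_not, Finset.card_univ_sdiff, Nat.cast_sub (Finset.card_le_univ I)]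

lemma le_of_le_mul_add_mul {s t a b : ℝ} (h : s ≤ t * (a * s + (1 - a) * b)) (hta : t * a < 1) :
    s ≤ t / (1 - t * a) * (1 - a) * b := by
  rw [div_mul_eq_mul_div, div_mul_eq_mul_div, le_div_iff₀ (by linarith)]
  linarith

section Phi

variable {d N : ℕ} {Pl : Cyl d N → Measure (ℕ → Cyl d N)} {j : ℤ} {lam : ℝ}
  {A : Finset (Cyl d N)}

lemma phi_eq_toReal_visitMGF (z : Cyl d N) :
    phi d N Pl j lam A z = (visitMGF Pl (Btl d N j) A lam z).toReal := by
  have hsum : ∀ ω, (∑ x ∈ A, if entT {x} ω < exitT (Btl d N j) ω then (1 : ℝ) else 0) =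
      visitCount (Btl d N j) A ω := fun ω => by
    rw [Finset.sum_boole]
    rfl
  simp_rw [phi, hsum]
  rw [integral_eq_lintegral_of_nonneg_ae (.of_forall fun ω => (Real.exp_pos _).le)
    ((measurable_from_nat (f := fun k : ℕ => Real.exp (lam * k))).comp
      (measurable_visitCount _ _)).aestronglyMeasurable]
  rfl

lemma IsCylRW.isMarkovLaw (hPl : IsCylRW d N Pl) : IsMarkovLaw (stepProb d N) Pl :=
  -- `IsCylRW` decides `γ 0 = x` with the instance of `Cyl d N`, `IsMarkovLaw` classically
  fun x n γ => by rw [hPl.2 x n γ]; congr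

variable [∀ z, IsProbabilityMeasure (Pl z)]

lemma visitMGF_ne_top {V : Set (Cyl d N)} (hlam : 0 ≤ lam) (z : Cyl d N) :
    visitMGF Pl V A lam z ≠ ⊤ :=
  ne_top_of_le_ne_top ENNReal.ofReal_ne_top (visitMGF_le_exp_mul_card hlam z)

lemma one_le_phi (hlam : 0 ≤ lam) (z : Cyl d N) : 1 ≤ phi d N Pl j lam A z := by
  simpa [phi_eq_toReal_visitMGF] using
    ENNReal.toReal_mono (visitMGF_ne_top hlam z) (one_le_visitMGF hlam z)

lemma phi_le_exp_mul_card (hlam : 0 ≤ lam) (z : Cyl d N) :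
    phi d N Pl j lam A z ≤ Real.exp (lam * A.card) := by
  rw [phi_eq_toReal_visitMGF]
  exact ENNReal.toReal_le_of_le_ofReal (Real.exp_pos _).le (visitMGF_le_exp_mul_card hlam z)

lemma phi_le_one_add_mul_of_forall_mem_le (hP : IsMarkovLaw (stepProb d N) Pl) (hlam : 0 ≤ lam)
    {F : Set (Cyl d N)} (hAF : ↑A ⊆ F) {b : ℝ} (hb0 : 0 ≤ b)
    (hb : ∀ x ∈ F, phi d N Pl j lam A x ≤ b) (z : Cyl d N) :
    phi d N Pl j lam A z ≤
      1 + (Pl z {ω | entT F ω < exitT (Btl d N j) ω}).toReal * (b - 1) := by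
  have hbF : ∀ x ∈ F, visitMGF Pl (Btl d N j) A lam x ≤ ENNReal.ofReal b := fun x hx => by
    rw [← ENNReal.ofReal_toReal (visitMGF_ne_top (Pl := Pl) hlam x), ← phi_eq_toReal_visitMGF]
    exact ENNReal.ofReal_le_ofReal (hb x hx)
  have h := hP.visitMGF_le_add_mul_of_forall_mem_le hlam hAF hbF z
  rw [phi_eq_toReal_visitMGF]
  refine (ENNReal.toReal_mono (by finiteness) h).trans_eq ?_
  rw [ENNReal.toReal_add (by finiteness) (by finiteness), ENNReal.toReal_mul,
    ENNReal.toReal_ofReal hb0, prob_compl_eq_one_sub (measurableSet_entT_lt_exitT _ _),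
    ENNReal.toReal_sub_of_le prob_le_one ENNReal.one_ne_top, ENNReal.toReal_one]
  ring

lemma phi_le_of_forall_mem_le (hP : IsMarkovLaw (stepProb d N) Pl) (hlam : 0 ≤ lam)
    {F : Set (Cyl d N)} (hAF : ↑A ⊆ F) {b : ℝ} (hb1 : 1 ≤ b)
    (hb : ∀ x ∈ F, phi d N Pl j lam A x ≤ b) (z : Cyl d N) : phi d N Pl j lam A z ≤ b := by
  have h := phi_le_one_add_mul_of_forall_mem_le hP hlam hAF (by linarith) hb z
  have hp : (Pl z {ω | entT F ω < exitT (Btl d N j) ω}).toReal ≤ 1 := measureReal_le_one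
  nlinarith

lemma phi_le_exp_mul_avg (hP : IsMarkovLaw (stepProb d N) Pl) (hlam : 0 ≤ lam) (x : Cyl d N) :
    phi d N Pl j lam A x ≤ Real.exp lam *
      ((2 * ((d : ℝ) + 1))⁻¹ *
        ∑ r : Fin (d + 1) × Bool, phi d N Pl j lam A (x + projE d N (unitVec d r))) := by
  have h := hP.visitMGF_le_exp_mul_tsum (V := Btl d N j) (A := A) hlam x
  rw [tsum_stepProb_mul] at h
  simp_rw [phi_eq_toReal_visitMGF]
  have hfin : ∀ r ∈ (Finset.univ : Finset (Fin (d + 1) × Bool)),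
      visitMGF Pl (Btl d N j) A lam (x + projE d N (unitVec d r)) ≠ ⊤ :=
    fun r _ => visitMGF_ne_top (Pl := Pl) hlam _
  refine (ENNReal.toReal_mono (ENNReal.mul_ne_top ENNReal.ofReal_ne_top
    (ENNReal.mul_ne_top (by simp) (ENNReal.sum_ne_top.mpr hfin))) h).trans_eq ?_
  rw [ENNReal.toReal_mul, ENNReal.toReal_ofReal (Real.exp_pos _).le, ENNReal.toReal_mul,
    ENNReal.toReal_sum hfin, ENNReal.toReal_inv]
  norm_cast

lemma toReal_measure_le_qNval {m : ℕ} {F : Set (Cyl d N)} (hF : F ∈ Lcoll d N m) {z : Cyl d N}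
    (hz : z ∈ bdry d N F) :
    (Pl z {ω | entT F ω < exitT (Btl d N j) ω}).toReal ≤ qNval d N m Pl j :=
  le_csSup ⟨1, by rintro r ⟨F', -, z', -, rfl⟩; exact measureReal_le_one⟩ ⟨F, hF, z, hz, rfl⟩

lemma phi_le_phiSup (hlam : 0 ≤ lam) (z : Cyl d N) :
    phi d N Pl j lam A z ≤ phiSup d N Pl j lam A :=
  le_ciSup ⟨_, Set.forall_mem_range.mpr (phi_le_exp_mul_card hlam)⟩ z

lemma phi_le_one_add_qNval_mul (hP : IsMarkovLaw (stepProb d N) Pl) (hlam : 0 ≤ lam) {m : ℕ}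
    {F : Set (Cyl d N)} (hF : F ∈ Lcoll d N m) (hAF : ↑A ⊆ F) {z : Cyl d N}
    (hz : z ∈ bdry d N F) :
    phi d N Pl j lam A z ≤ 1 + qNval d N m Pl j * (phiSup d N Pl j lam A - 1) := by
  have hs1 : 1 ≤ phiSup d N Pl j lam A := (one_le_phi hlam z).trans (phi_le_phiSup hlam z)
  have h := phi_le_one_add_mul_of_forall_mem_le hP hlam hAF (by linarith)
    (fun x _ => phi_le_phiSup hlam x) z
  nlinarith [toReal_measure_le_qNval (Pl := Pl) (j := j) hF hz]

lemma phi_le_of_mem_coordLattice (hP : IsMarkovLaw (stepProb d N) Pl) (hN : 2 ≤ N)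
    (hlam : 0 ≤ lam) {I : Finset (Fin (d + 1))} {y : Lat d} {s b : ℝ}
    (hs : ∀ z, phi d N Pl j lam A z ≤ s)
    (hb : ∀ z ∈ bdry d N (coordLattice d N I y), phi d N Pl j lam A z ≤ b)
    {x : Cyl d N} (hx : x ∈ coordLattice d N I y) :
    phi d N Pl j lam A x ≤
      Real.exp lam * (I.card / (d + 1) * s + (1 - I.card / (d + 1)) * b) := calc
  phi d N Pl j lam A x ≤ Real.exp lam * ((2 * ((d : ℝ) + 1))⁻¹ *
      ∑ r : Fin (d + 1) × Bool, phi d N Pl j lam A (x + projE d N (unitVec d r))) :=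
    phi_le_exp_mul_avg hP hlam x
  _ ≤ Real.exp lam * ((2 * ((d : ℝ) + 1))⁻¹ *
      ∑ r : Fin (d + 1) × Bool, if r.1 ∈ I then s else b) := by
    gcongr with r
    split_ifs with hr
    exacts [hs _, hb _ (add_projE_unitVec_mem_bdry hN hx hr)]
  _ = _ := by
    rw [sum_ite_mem_fst, Fintype.card_fin]
    push_cast
    field_simp

end Phi

theorem statement_5_general (d N m : ℕ) (hN : 2 ≤ N)
    (lam : ℝ) (hlam : 0 < lam) (hlam2 : Real.exp lam * m < (d : ℝ) + 1)
    (Pl : Cyl d N → Measure (ℕ → Cyl d N)) (hPl : IsCylRW d N Pl)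
    (j : ℤ) (F : Set (Cyl d N)) (hF : F ∈ Lcoll d N m)
    (A : Finset (Cyl d N))
    (hAF : (↑A : Set (Cyl d N)) ⊆ F ∩ (Cblk d N j ∪ bdry d N (Cblk d N j))) :
    phiSup d N Pl j lam A ≤
      Real.exp lam / (1 - Real.exp lam * m / ((d : ℝ) + 1)) * (1 - (m : ℝ) / (d + 1)) *
        (1 + (phiSup d N Pl j lam A - 1) * qNval d N m Pl j) := by
  have := hPl.1
  have hAF' : (↑A : Set (Cyl d N)) ⊆ F := hAF.trans Set.inter_subset_left
  have hbdry := fun z (hz : z ∈ bdry d N F) =>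
    phi_le_one_add_qNval_mul (j := j) hPl.isMarkovLaw hlam.le hF hAF' hz
  obtain ⟨I, rfl, y, rfl⟩ := hF
  have hle_on_F := fun x (hx : x ∈ coordLattice d N I y) =>
    phi_le_of_mem_coordLattice hPl.isMarkovLaw hN hlam.le (phi_le_phiSup hlam.le) hbdry hx
  have hone_le := (one_le_phi hlam.le _).trans (hle_on_F _ ⟨0, fun _ _ => rfl, rfl⟩)
  have hsup := ciSup_le (phi_le_of_forall_mem_le hPl.isMarkovLaw hlam.le hAF' hone_le hle_on_F)
  have hta : Real.exp lam * (I.card / (d + 1)) < 1 := by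
    rwa [← mul_div_assoc, div_lt_one (by positivity)]
  rw [mul_div_assoc, mul_comm (_ - 1)]
  exact le_of_le_mul_add_mul hsup hta

/-- **Lemma 1.3.** For `d ≥ 3`, `1 ≤ m ≤ d-2`, `λ > 0` with `e^λ m < d+1` and `N ≥ 2`:
for any `j ∈ ℤ`, `F ∈ L_m` and nonempty `A ⊆ F ∩ (C_j ∪ ∂C_j)`,
`‖φ_j‖_∞ ≤ e^λ/(1 - e^λ m/(d+1)) · (1 - m/(d+1)) · (1 + (‖φ_j‖_∞ - 1) q_N)`. -/
theorem statement_5 (d N m : ℕ) (hd : 3 ≤ d) (hm1 : 1 ≤ m) (hm2 : m ≤ d - 2) (hN : 2 ≤ N)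
    (lam : ℝ) (hlam : 0 < lam) (hlam2 : Real.exp lam * m < (d : ℝ) + 1)
    (Pl : Cyl d N → Measure (ℕ → Cyl d N)) (hPl : IsCylRW d N Pl)
    (j : ℤ) (F : Set (Cyl d N)) (hF : F ∈ Lcoll d N m)
    (A : Finset (Cyl d N)) (hA : A.Nonempty)
    (hAF : (↑A : Set (Cyl d N)) ⊆ F ∩ (Cblk d N j ∪ bdry d N (Cblk d N j))) :
    phiSup d N Pl j lam A ≤
      Real.exp lam / (1 - Real.exp lam * m / ((d : ℝ) + 1)) * (1 - (m : ℝ) / (d + 1)) *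
        (1 + (phiSup d N Pl j lam A - 1) * qNval d N m Pl j) :=
  statement_5_general d N m hN lam hlam hlam2 Pl hPl j F hF A hAF

end DiscCyl
end

section
/- (Corollary 1.6, claim (1.47)) Let d ≥ 3, c_0 > 0, and let N ≥ 2 be large enough so that (ℤ/Nℤ)^d has ℓ^∞-diameter bigger than c_0 log N. Then for any j ∈ ℤ and t ≥ 0, on the event G_{j,t} = V_{c_0,j,t} ∩ U_{c_0,j,t}, for every 0 ≤ n ≤ D^j_t, all segments of length L_0 := ⌊c_0 log N⌋ contained in C_j \ X_{[0,n]} belong to the same connected component of C_j \ X_{[0,n]}. -/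
/-!
Fix a horizontal direction `m`. By `V`, from every point of `C_j` one reaches, within `√N` steps
in direction `m`, a segment of length `L₀` in direction `m` avoiding `X_{[0,D^j_t]}`; being
horizontal, it stays in `C_j`. Segments of length `L₀` are connected and, since the diameter
hypothesis forces `2 L₀ ≤ N`, have `ℓ^∞`-diameter `L₀`; so by `U` any two of them lying in a
common plane of `L₂` are joined in `C_j \ X_{[0,n]}`. Each given segment is coplanar with the
free `m`-segment near its base point, and the free `m`-segments near `x₁` and `x₂` are joined by
changing coordinates one at a time: each step stays in the plane spanned by `m` and the changed
coordinate, and every intermediate point has the height of one of the two endpoints, hence lies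
in `C_j`.
-/

open MeasureTheory Filter
open scoped ENNReal Classical

namespace DiscCyl

section Lattice

variable {d N : ℕ}

lemma projE_neg (v : Lat d) : projE d N (-v) = -projE d N v :=
  Prod.ext (funext fun _ => Int.cast_neg _) rfl

lemma projE_zsmul (a : ℤ) (v : Lat d) : projE d N (a • v) = a • projE d N v :=
  Prod.ext (funext fun _ => by simp [projE]) (by simp [projE])

lemma projE_surjective : Function.Surjective (projE d N) := fun x =>
  ⟨Fin.snoc (α := fun _ => ℤ) (fun i => ((x.1 i).cast : ℤ)) x.2,
    Prod.ext (funext fun i => by simp [projE]) (by simp [projE])⟩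

lemma snd_add_projE (x : Cyl d N) (v : Lat d) : (x + projE d N v).2 = x.2 + v (Fin.last d) :=
  rfl

lemma mem_unitVecs {e : Lat d} :
    e ∈ unitVecs d ↔ ∃ c, e = Pi.single c 1 ∨ e = Pi.single c (-1) := by
  simp only [unitVecs, Finset.mem_image, Finset.mem_univ, true_and, Prod.exists,
    Bool.exists_bool, Bool.false_eq_true, ↓reduceIte]
  exact exists_congr fun c => by rw [or_comm, eq_comm, @eq_comm _ _ e]

lemma neg_mem_unitVecs {e : Lat d} (he : e ∈ unitVecs d) : -e ∈ unitVecs d := by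
  obtain ⟨c, rfl | rfl⟩ := mem_unitVecs.1 he <;>
    exact mem_unitVecs.2 ⟨c, by simp [Pi.single_neg]⟩

lemma exists_support_subset_singleton {e : Lat d} (he : e ∈ unitVecs d) :
    ∃ c, Function.support e ⊆ {c} := by
  obtain ⟨c, rfl | rfl⟩ := mem_unitVecs.1 he <;> exact ⟨c, Pi.support_single_subset⟩

lemma natAbs_le_linf (v : Lat d) (c : Fin (d + 1)) : (v c).natAbs ≤ linf v :=
  Finset.le_sup (f := fun i => (v i).natAbs) (Finset.mem_univ c)

end Lattice

lemma natAbs_le_natAbs_of_intCast_eq {N : ℕ} {a b : ℤ} (h : (a : ZMod N) = b)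
    (hb : 2 * b.natAbs ≤ N) : b.natAbs ≤ a.natAbs := by
  by_contra! hab
  have hdvd : (N : ℤ) ∣ b - a := (ZMod.intCast_eq_intCast_iff_dvd_sub a b N).1 h
  have := Int.eq_zero_of_dvd_of_natAbs_lt_natAbs hdvd (by simp only [Int.natAbs_natCast]; omega)
  omega

section Cylinder

variable {d N : ℕ}

lemma projE_ne_zero (hN : N ≠ 1) {e : Lat d} (he : e ∈ unitVecs d) : projE d N e ≠ 0 := by
  obtain ⟨c, rfl | rfl⟩ := mem_unitVecs.1 he <;> induction c using Fin.lastCases with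
  | last => simp [projE, Prod.ext_iff]
  | cast i =>
    simp only [ne_eq, Prod.ext_iff, projE, funext_iff, not_and_or, not_forall]
    exact Or.inl ⟨i, by simpa [ZMod.one_eq_zero_iff] using hN⟩

lemma adj_add_projE (hN : N ≠ 1) {e : Lat d} (he : e ∈ unitVecs d) (x : Cyl d N) :
    adj d N x (x + projE d N e) :=
  ⟨fun h => projE_ne_zero hN he (left_eq_add.1 h), e, he, rfl⟩

lemma adj_symm {x y : Cyl d N} (h : adj d N x y) : adj d N y x := by
  obtain ⟨hne, e, he, rfl⟩ := h
  exact ⟨hne.symm, -e, neg_mem_unitVecs he, by rw [projE_neg, add_neg_cancel_right]⟩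

lemma connIn_symm {S : Set (Cyl d N)} {x y : Cyl d N} (h : connIn d N S x y) :
    connIn d N S y x :=
  Relation.ReflTransGen.mono (fun _ _ hab => ⟨hab.2.1, hab.1, adj_symm hab.2.2⟩) _ _
    (Relation.ReflTransGen.swap _ _ h)

lemma connIn_mono {S T : Set (Cyl d N)} (hST : S ⊆ T) {x y : Cyl d N}
    (h : connIn d N S x y) : connIn d N T x y :=
  Relation.ReflTransGen.mono (fun _ _ hab => ⟨hST hab.1, hST hab.2.1, hab.2.2⟩) _ _ h

lemma mem_segment_self (x : Cyl d N) (e : Lat d) (L : ℕ) : x ∈ segment d N x e L :=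
  ⟨0, L.zero_le, by simp [projE_zero]⟩

lemma isConnIn_segment (hN : N ≠ 1) {e : Lat d} (he : e ∈ unitVecs d) (x : Cyl d N) (L : ℕ) :
    IsConnIn d N (segment d N x e L) := by
  have chain : ∀ l₁ l₂ : ℕ, l₁ ≤ l₂ → l₂ ≤ L → connIn d N (segment d N x e L)
      (x + projE d N ((l₁ : ℤ) • e)) (x + projE d N ((l₂ : ℤ) • e)) := by
    intro l₁ l₂ h
    induction l₂, h using Nat.le_induction with
    | base => exact fun _ => .refl
    | succ l _ ih =>
      intro hl
      have hstep : x + projE d N (((l + 1 : ℕ) : ℤ) • e) =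
          x + projE d N ((l : ℤ) • e) + projE d N e := by
        rw [projE_zsmul, projE_zsmul]; push_cast; rw [add_smul, one_smul, add_assoc]
      exact (ih (by omega)).tail
        ⟨⟨l, by omega, rfl⟩, ⟨l + 1, hl, rfl⟩, hstep ▸ adj_add_projE hN he _⟩
  rintro _ ⟨l₁, hl₁, rfl⟩ _ ⟨l₂, hl₂, rfl⟩
  rcases le_total l₁ l₂ with h | h
  · exact chain l₁ l₂ h hl₂
  · exact connIn_symm (chain l₂ l₁ h hl₁)

lemma le_cylDist_add_projE {L : ℕ} (hL : 2 * L ≤ N) {e : Lat d} (he : e ∈ unitVecs d)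
    (x : Cyl d N) : L ≤ cylDist d N x (x + projE d N ((L : ℤ) • e)) := by
  refine le_csInf ⟨_, (L : ℤ) • e, (add_sub_cancel_left _ _).symm, rfl⟩ ?_
  rintro _ ⟨v, hv, rfl⟩
  rw [add_sub_cancel_left] at hv
  obtain ⟨c, rfl | rfl⟩ := mem_unitVecs.1 he <;> refine le_trans ?_ (natAbs_le_linf v c) <;>
    induction c using Fin.lastCases with
  | last =>
    have := congrArg Prod.snd hv
    simp only [projE, Pi.smul_apply, Pi.single_eq_same, smul_eq_mul, mul_one, mul_neg] at this
    simp [this]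
  | cast i =>
    have := congrFun (congrArg Prod.fst hv) i
    simp only [projE, Pi.smul_apply, Pi.single_eq_same, smul_eq_mul, mul_one, mul_neg] at this
    simpa using natAbs_le_natAbs_of_intCast_eq this (by simpa)

lemma diamGE_segment {L : ℕ} (hL : 2 * L ≤ N) {e : Lat d} (he : e ∈ unitVecs d)
    (x : Cyl d N) : diamGE d N (segment d N x e L) L :=
  ⟨x, mem_segment_self x e L, _, ⟨L, le_rfl, rfl⟩, le_cylDist_add_projE hL he x⟩

lemma cylDist_le_of_snd_eq [NeZero N] {x y : Cyl d N} (h : x.2 = y.2) :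
    cylDist d N x y ≤ N / 2 := by
  set v : Lat d := Fin.snoc (α := fun _ => ℤ) (fun i => ((y - x).1 i).valMinAbs) 0
  have hv : projE d N v = y - x :=
    Prod.ext (funext fun i => by simp [v, projE, ZMod.coe_valMinAbs]) (by simp [v, projE, h])
  have hlinf : linf v ≤ N / 2 := Finset.sup_le fun i _ => by
    induction i using Fin.lastCases with
    | last => simp [v]
    | cast i => simpa [v] using ZMod.natAbs_valMinAbs_le _
  exact le_trans (Nat.sInf_le ⟨v, hv, rfl⟩) hlinf

lemma two_mul_floor_le_of_lt_cylDist [NeZero N] {r : ℝ} {a b : Fin d → ZMod N}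
    (h : r < cylDist d N (a, 0) (b, 0)) : 2 * ⌊r⌋₊ ≤ N := by
  have := (Nat.floor_le_of_le h.le).trans (cylDist_le_of_snd_eq rfl)
  omega

lemma mem_Cblk_of_snd_eq {j : ℤ} {x y : Cyl d N} (hx : x ∈ Cblk d N j) (h : y.2 = x.2) :
    y ∈ Cblk d N j := by
  simpa [Cblk, h] using hx

end Cylinder

section Plane

variable {d N : ℕ}

/-- `x + π_E(ℤ^s)`, an element of `L_{|s|}`. -/
def plane (d N : ℕ) (x : Cyl d N) (s : Set (Fin (d + 1))) : Set (Cyl d N) :=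
  {y | ∃ v : Lat d, Function.support v ⊆ s ∧ y = x + projE d N v}

lemma self_mem_plane (x : Cyl d N) (s : Set (Fin (d + 1))) : x ∈ plane d N x s :=
  ⟨0, by simp, by rw [projE_zero, add_zero]⟩

lemma add_projE_mem_plane {x y : Cyl d N} {s : Set (Fin (d + 1))} {v : Lat d}
    (hy : y ∈ plane d N x s) (hv : Function.support v ⊆ s) : y + projE d N v ∈ plane d N x s := by
  obtain ⟨w, hw, rfl⟩ := hy
  exact ⟨w + v, (Function.support_add w v).trans (Set.union_subset hw hv),
    by rw [projE_add, add_assoc]⟩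

lemma add_projE_smul_single_mem_plane (x : Cyl d N) (a b : ℤ) {c : Fin (d + 1)}
    {s : Set (Fin (d + 1))} (hc : c ∈ s) : x + projE d N (a • Pi.single c b) ∈ plane d N x s :=
  add_projE_mem_plane (self_mem_plane x s) ((Function.support_const_smul_subset _ _).trans
    (Pi.support_single_subset.trans (Set.singleton_subset_iff.2 hc)))

lemma segment_subset_plane {x y : Cyl d N} {s : Set (Fin (d + 1))} {e : Lat d}
    (hy : y ∈ plane d N x s) (he : Function.support e ⊆ s) (L : ℕ) :
    segment d N y e L ⊆ plane d N x s := by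
  rintro _ ⟨l, -, rfl⟩
  exact add_projE_mem_plane hy ((Function.support_const_smul_subset _ e).trans he)

lemma exists_mem_Lcoll_two_plane_subset (hd : 1 ≤ d) (x : Cyl d N) (c c' : Fin (d + 1)) :
    ∃ F ∈ Lcoll d N 2, plane d N x {c, c'} ⊆ F := by
  obtain ⟨I, hcI, hI⟩ := Finset.exists_superset_card_eq (Finset.card_le_two (a := c) (b := c'))
    (by simpa using hd)
  obtain ⟨x₀, rfl⟩ := projE_surjective x
  refine ⟨_, ⟨I, hI, x₀, rfl⟩, ?_⟩
  rintro _ ⟨v, hv, rfl⟩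
  have hvI : Function.support v ⊆ I :=
    hv.trans (by simpa [Set.insert_subset_iff, Finset.insert_subset_iff] using hcI)
  exact ⟨v, fun i hi => Function.support_subset_iff'.1 hvI i (by exact_mod_cast hi),
    projE_add x₀ v⟩

end Plane

section Events

variable {d N : ℕ} {c₀ : ℝ} {j : ℤ} {k n : ℕ} {ω : ℕ → Cyl d N}

lemma connIn_of_segments_subset_plane (hU : ω ∈ Uev d N c₀ j k)
    (hn : (n : ℕ∞) ≤ DD d N j k ω) (hd : 1 ≤ d) (hN : N ≠ 1)
    (hL : 2 * ⌊c₀ * Real.log N⌋₊ ≤ N) {x y y' : Cyl d N} {c c' : Fin (d + 1)} {e e' : Lat d}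
    (he : e ∈ unitVecs d) (he' : e' ∈ unitVecs d)
    (hy : y ∈ plane d N x {c, c'}) (hy' : y' ∈ plane d N x {c, c'})
    (hes : Function.support e ⊆ {c, c'}) (hes' : Function.support e' ⊆ {c, c'})
    (hS : segment d N y e ⌊c₀ * Real.log N⌋₊ ⊆ Cblk d N j \ ran ω n)
    (hS' : segment d N y' e' ⌊c₀ * Real.log N⌋₊ ⊆ Cblk d N j \ ran ω n) :
    ∀ a ∈ segment d N y e ⌊c₀ * Real.log N⌋₊, ∀ b ∈ segment d N y' e' ⌊c₀ * Real.log N⌋₊,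
      connIn d N (Cblk d N j \ ran ω n) a b := by
  obtain ⟨F, hF, hxF⟩ := exists_mem_Lcoll_two_plane_subset hd x c c'
  have in_F : ∀ {z : Cyl d N} {f : Lat d}, z ∈ plane d N x {c, c'} →
      Function.support f ⊆ {c, c'} → segment d N z f ⌊c₀ * Real.log N⌋₊ ⊆ Cblk d N j \ ran ω n →
      segment d N z f ⌊c₀ * Real.log N⌋₊ ⊆ (F ∩ Cblk d N j) \ ran ω n :=
    fun hz hf hzS _ hp => ⟨⟨hxF (segment_subset_plane hz hf _ hp), (hzS hp).1⟩, (hzS hp).2⟩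
  intro a ha b hb
  exact connIn_mono (Set.sdiff_subset_sdiff_left Set.inter_subset_right)
    (hU F hF n hn _ _ (in_F hy hes hS) (in_F hy' hes' hS')
      (isConnIn_segment hN he y _) (isConnIn_segment hN he' y' _)
      (diamGE_segment hL he y) (diamGE_segment hL he' y') a ha b hb)

lemma exists_free_segment (hV : ω ∈ Vev d N c₀ j k) (hn : (n : ℕ∞) ≤ DD d N j k ω)
    {x : Cyl d N} (hx : x ∈ Cblk d N j) (m : Fin d) :
    ∃ i : ℕ, segment d N (x + projE d N ((i : ℤ) • Pi.single m.castSucc 1))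
      (Pi.single m.castSucc 1) ⌊c₀ * Real.log N⌋₊ ⊆ Cblk d N j \ ran ω n := by
  obtain ⟨i, -, hfree⟩ := hV x hx _ (mem_unitVecs.2 ⟨m.castSucc, Or.inl rfl⟩)
  refine ⟨i, ?_⟩
  rintro _ ⟨l, hl, rfl⟩
  rw [add_assoc, ← projE_add, ← add_smul, ← Nat.cast_add]
  refine ⟨mem_Cblk_of_snd_eq hx ?_, fun ⟨t, ht, hωt⟩ =>
    hfree (i + l) (by omega) (by omega) ⟨t, (Nat.cast_le.2 ht).trans hn, hωt⟩⟩
  rw [snd_add_projE, Pi.smul_apply, Pi.single_eq_of_ne (Fin.castSucc_lt_last m).ne', smul_zero,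
    add_zero]

lemma connIn_of_free_segments (hV : ω ∈ Vev d N c₀ j k) (hU : ω ∈ Uev d N c₀ j k)
    (hn : (n : ℕ∞) ≤ DD d N j k ω) (hd : 1 ≤ d) (hN : N ≠ 1)
    (hL : 2 * ⌊c₀ * Real.log N⌋₊ ≤ N) (m : Fin d) (T : Finset (Fin (d + 1)))
    {y y' : Cyl d N} {u : Lat d}
    (hu : Function.support u ⊆ insert m.castSucc (T : Set (Fin (d + 1))))
    (hy' : y' = y + projE d N u)
    (hS : segment d N y (Pi.single m.castSucc 1) ⌊c₀ * Real.log N⌋₊ ⊆ Cblk d N j \ ran ω n)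
    (hS' : segment d N y' (Pi.single m.castSucc 1) ⌊c₀ * Real.log N⌋₊ ⊆ Cblk d N j \ ran ω n) :
    connIn d N (Cblk d N j \ ran ω n) y y' := by
  have he : Pi.single m.castSucc (1 : ℤ) ∈ unitVecs d := mem_unitVecs.2 ⟨_, Or.inl rfl⟩
  have hes : ∀ c, Function.support (Pi.single m.castSucc (1 : ℤ)) ⊆ {m.castSucc, c} :=
    fun c => Pi.support_single_subset.trans (by simp)
  induction T using Finset.induction_on generalizing y' u with
  | empty =>
    have hu' : Function.support u ⊆ {m.castSucc, m.castSucc} := by simpa using hu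
    exact connIn_of_segments_subset_plane hU hn hd hN hL he he (self_mem_plane y _)
      (hy' ▸ add_projE_mem_plane (self_mem_plane y _) hu') (hes _) (hes _) hS hS'
      y (mem_segment_self _ _ _) y' (mem_segment_self _ _ _)
  | insert m' T hm'T ih =>
    set u₀ := Function.update u m' 0
    set w := y + projE d N u₀
    have hw : w ∈ Cblk d N j := by
      have hw2 : w.2 = y.2 + Function.update u m' 0 (Fin.last d) := snd_add_projE y u₀
      by_cases hm' : m' = Fin.last d
      · refine mem_Cblk_of_snd_eq (hS (mem_segment_self _ _ _)).1 ?_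
        rw [hw2, hm', Function.update_self, add_zero]
      · refine mem_Cblk_of_snd_eq (hS' (mem_segment_self _ _ _)).1 ?_
        rw [hw2, Function.update_of_ne (Ne.symm hm'), hy', snd_add_projE]
    obtain ⟨i, hSz⟩ := exists_free_segment hV hn hw m
    have hu₀ : Function.support (u₀ + (i : ℤ) • Pi.single m.castSucc 1) ⊆
        insert m.castSucc (T : Set (Fin (d + 1))) := by
      refine (Function.support_add _ _).trans (Set.union_subset ?_ ?_)
      · rw [Function.support_update_zero]
        rintro l ⟨hl, hne⟩
        simpa [Set.mem_singleton_iff.not.1 hne] using hu hl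
      · exact (Function.support_const_smul_subset _ _).trans
          (Pi.support_single_subset.trans (by simp))
    have hyz := ih hu₀ (by rw [projE_add, ← add_assoc]) hSz
    have hsplit : y' = w + projE d N (Pi.single m' (u m')) := by
      rw [hy', add_assoc, ← projE_add]
      congr 2
      ext l
      by_cases hl : l = m' <;> simp [u₀, hl]
    have hzy' := connIn_of_segments_subset_plane (x := w) (c' := m') hU hn hd hN hL he he
      (add_projE_smul_single_mem_plane w _ _ (by simp))
      (hsplit ▸ add_projE_mem_plane (self_mem_plane w _) (Pi.support_single_subset.trans (by simp)))
      (hes _) (hes _) hSz hS' _ (mem_segment_self _ _ _) y' (mem_segment_self _ _ _)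
    exact hyz.trans hzy'

end Events

theorem statement_9_general (d N : ℕ) (hd : 3 ≤ d) (hN : 2 ≤ N) (c₀ : ℝ)
    (hdiam : ∃ a b : Fin d → ZMod N,
      c₀ * Real.log N < cylDist d N (a, (0 : ℤ)) (b, (0 : ℤ)))
    (j : ℤ) (k : ℕ) (ω : ℕ → Cyl d N)
    (hω : ω ∈ Vev d N c₀ j k ∩ Uev d N c₀ j k)
    (n : ℕ) (hn : (n : ℕ∞) ≤ DD d N j k ω)
    (x₁ x₂ : Cyl d N) (e₁ e₂ : Lat d) (he₁ : e₁ ∈ unitVecs d) (he₂ : e₂ ∈ unitVecs d)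
    (h₁ : segment d N x₁ e₁ ⌊c₀ * Real.log N⌋₊ ⊆ Cblk d N j \ ran ω n)
    (h₂ : segment d N x₂ e₂ ⌊c₀ * Real.log N⌋₊ ⊆ Cblk d N j \ ran ω n) :
    ∀ p ∈ segment d N x₁ e₁ ⌊c₀ * Real.log N⌋₊,
    ∀ q ∈ segment d N x₂ e₂ ⌊c₀ * Real.log N⌋₊,
      connIn d N (Cblk d N j \ ran ω n) p q := by
  intro p hp q hq
  have : NeZero N := ⟨by omega⟩
  obtain ⟨a, b, hab⟩ := hdiam
  have hL := two_mul_floor_le_of_lt_cylDist hab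
  let m : Fin d := ⟨0, by omega⟩
  have he : Pi.single m.castSucc (1 : ℤ) ∈ unitVecs d := mem_unitVecs.2 ⟨_, Or.inl rfl⟩
  obtain ⟨c₁, hc₁⟩ := exists_support_subset_singleton he₁
  obtain ⟨c₂, hc₂⟩ := exists_support_subset_singleton he₂
  obtain ⟨i₁, hS₁⟩ := exists_free_segment hω.1 hn (h₁ (mem_segment_self _ _ _)).1 m
  obtain ⟨i₂, hS₂⟩ := exists_free_segment hω.1 hn (h₂ (mem_segment_self _ _ _)).1 m
  have hp₁ := connIn_of_segments_subset_plane (x := x₁) (c := c₁) (c' := m.castSucc) hω.2 hn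
    (by omega) (by omega) hL he₁ he (self_mem_plane _ _)
    (add_projE_smul_single_mem_plane _ _ _ (by simp)) (hc₁.trans (by simp))
    (Pi.support_single_subset.trans (by simp)) h₁ hS₁ p hp _ (mem_segment_self _ _ _)
  obtain ⟨u, hu⟩ := projE_surjective (d := d) (N := N)
    (x₂ + projE d N ((i₂ : ℤ) • Pi.single m.castSucc 1) -
      (x₁ + projE d N ((i₁ : ℤ) • Pi.single m.castSucc 1)))
  have h₁₂ := connIn_of_free_segments hω.1 hω.2 hn (by omega) (by omega) hL m Finset.univ
    (by simp) (by rw [hu, add_sub_cancel]) hS₁ hS₂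
  have h₂q := connIn_of_segments_subset_plane (x := x₂) (c := m.castSucc) (c' := c₂) hω.2 hn
    (by omega) (by omega) hL he he₂ (add_projE_smul_single_mem_plane _ _ _ (by simp))
    (self_mem_plane _ _) (Pi.support_single_subset.trans (by simp)) (hc₂.trans (by simp))
    hS₂ h₂ _ (mem_segment_self _ _ _) q hq
  exact hp₁.trans (h₁₂.trans h₂q)

/-- **Corollary 1.6, claim (1.47).** On `G_{j,t} = V_{c₀,j,t} ∩ U_{c₀,j,t}`, for any
`0 ≤ n ≤ D^j_t`, all segments of length `L₀ = ⌊c₀ log N⌋` contained in `C_j \ X_{[0,n]}`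
lie in the same connected component of `C_j \ X_{[0,n]}`. -/
theorem statement_9 (d N : ℕ) (hd : 3 ≤ d) (hN : 2 ≤ N) (c₀ : ℝ) (hc₀ : 0 < c₀)
    (hdiam : ∃ a b : Fin d → ZMod N,
      c₀ * Real.log N < cylDist d N (a, (0 : ℤ)) (b, (0 : ℤ)))
    (j : ℤ) (k : ℕ) (ω : ℕ → Cyl d N)
    (hω : ω ∈ Vev d N c₀ j k ∩ Uev d N c₀ j k)
    (n : ℕ) (hn : (n : ℕ∞) ≤ DD d N j k ω)
    (x₁ x₂ : Cyl d N) (e₁ e₂ : Lat d) (he₁ : e₁ ∈ unitVecs d) (he₂ : e₂ ∈ unitVecs d)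
    (h₁ : segment d N x₁ e₁ ⌊c₀ * Real.log N⌋₊ ⊆ Cblk d N j \ ran ω n)
    (h₂ : segment d N x₂ e₂ ⌊c₀ * Real.log N⌋₊ ⊆ Cblk d N j \ ran ω n) :
    ∀ p ∈ segment d N x₁ e₁ ⌊c₀ * Real.log N⌋₊,
    ∀ q ∈ segment d N x₂ e₂ ⌊c₀ * Real.log N⌋₊,
      connIn d N (Cblk d N j \ ran ω n) p q :=
  statement_9_general d N hd hN c₀ hdiam j k ω hω n hn x₁ x₂ e₁ e₂ he₁ he₂ h₁ h₂

end DiscCyl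
end
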